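/- Mogensen's representation schema yields a syntax framework for lambda calculus: the map ⌜·⌝ : Λ → NF_Λ defined by ⌜x⌝ = λabc. a x, ⌜M N⌝ = λabc. b ⌜M⌝ ⌜N⌝, ⌜λx.M⌝ = λabc. c (λx.⌜M⌝) is injective and total, every ⌜M⌝ is a β-normal form, and together with the self-interpreter E satisfying E ⌜M⌝ =β M, the tuple (NF_Λ, ⌜·⌝, NF_Λ, ⌜·⌝, E_Λ) satisfies the Quotation and Evaluation Axioms, where E_Λ(M) = E M when M = ⌜N⌝ for some N and is undefined otherwise. -/
import Mathlib


/-- Untyped lambda terms with named variables (numbers ≥ 3 are object variables;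
0, 1, 2 play the role of the fresh variables a, b, c). -/
inductive Term : Type
  | var : ℕ → Term
  | app : Term → Term → Term
  | lam : ℕ → Term → Term
deriving DecidableEq

/-- Mogensen's representation schema ⌜·⌝ with a = 0, b = 1, c = 2. -/
def rep : Term → Term
  | .var x => .lam 0 (.lam 1 (.lam 2 (.app (.var 0) (.var x))))
  | .app M N => .lam 0 (.lam 1 (.lam 2 (.app (.app (.var 1) (rep M)) (rep N))))
  | .lam x M => .lam 0 (.lam 1 (.lam 2 (.app (.var 2) (.lam x (rep M)))))

/-- β-normal: no subterm is a β-redex. -/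
def IsBetaNormal : Term → Prop
  | .var _ => True
  | .lam _ M => IsBetaNormal M
  | .app M N => IsBetaNormal M ∧ IsBetaNormal N ∧ ∀ x B, M ≠ .lam x B

/-- Substitution of s for the variable x. -/
def subst (x : ℕ) (s : Term) : Term → Term
  | .var y => if y = x then s else .var y
  | .app M N => .app (subst x s M) (subst x s N)
  | .lam y M => if y = x then .lam y M else .lam y (subst x s M)

/-- One-step β-reduction. -/
inductive BetaStep : Term → Term → Prop
  | beta (x : ℕ) (M N : Term) : BetaStep (.app (.lam x M) N) (subst x N M)
  | appl {M M' : Term} (N : Term) : BetaStep M M' → BetaStep (.app M N) (.app M' N)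
  | appr (M : Term) {N N' : Term} : BetaStep N N' → BetaStep (.app M N) (.app M N')
  | lam (x : ℕ) {M M' : Term} : BetaStep M M' → BetaStep (.lam x M) (.lam x M')

/-- β-equivalence. -/
def BetaEq : Term → Term → Prop := Relation.EqvGen BetaStep

lemma rep_inj : ∀ M N : Term, rep M = rep N → M = N := by
  intro M
  induction M with
  | var x => intro N h; cases N <;> simp [rep] at h <;> simp [h]
  | app A B ihA ihB =>
    intro N h; cases N <;> simp [rep] at h
    obtain ⟨h1, h2⟩ := h
    rw [ihA _ h1, ihB _ h2]
  | lam x A ih =>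
    intro N h; cases N <;> simp [rep] at h
    obtain ⟨h1, h2⟩ := h
    rw [h1, ih _ h2]

lemma rep_normal : ∀ M : Term, IsBetaNormal (rep M) := by
  intro M
  induction M with
  | var x => simp [rep, IsBetaNormal]
  | app A B ihA ihB => simp [rep, IsBetaNormal]; exact ⟨ihA, ihB⟩
  | lam x A ih => simp [rep, IsBetaNormal]; exact ih

/-- Mogensen's representation schema yields a syntax framework for lambda
calculus: ⌜·⌝ is injective and total, every ⌜M⌝ is a β-normal form (hence its
own semantic value, giving the Quotation Axiom), and, given a self-interpreter
E with E ⌜M⌝ =β M, the partial evaluation function E_Λ (defined exactly on the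
image of ⌜·⌝) satisfies the Evaluation Axiom. -/
theorem mogensen_syntax_framework
    (Eterm : Term)
    (hSelfInterp : ∀ M : Term, BetaEq (.app Eterm (rep M)) M) :
    Function.Injective rep ∧
    (∀ M : Term, IsBetaNormal (rep M)) ∧
    (∀ M N : Term, M = rep N → BetaEq (.app Eterm M) N) := by
  refine ⟨rep_inj, rep_normal, ?_⟩
  intro M N h
  rw [h]
  exact hSelfInterp N
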